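/- Let T^j_{ik} (with 1 ≤ i,j,k ≤ n) be complex numbers antisymmetric in the lower indices (T^j_{ik} = −T^j_{ki}), let Γ^j_{ik} be complex numbers, and define T^j_{ik,ℓ̄} = Σ_p (T^j_{pk} conj(Γ^i_{pℓ}) + T^j_{ip} conj(Γ^k_{pℓ}) − T^p_{ik} conj(Γ^p_{jℓ})). Suppose T^j_{ik} = 0 unless j > r ≥ i,k, and suppose the only possibly nonzero Γ are Γ^α_{ik} = 2T^α_{ik} for α > r and i,k ≤ r, and Γ^i_{kα} for i,k ≤ r, α > r, with Γ^i_{αk} = 0. If T^j_{ik,ℓ̄} = 0 for all indices, then T^α_{ik} = 0 for all α > r and i,k ≤ r. -/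
import Mathlib


theorem stmt_8 (n r : ℕ) (T Γ : Fin n → Fin n → Fin n → ℂ)
    (hTanti : ∀ j i k : Fin n, T j i k = -T j k i)
    (hTsupp : ∀ j i k : Fin n,
      ¬(r ≤ (j : ℕ) ∧ (i : ℕ) < r ∧ (k : ℕ) < r) → T j i k = 0)
    (hΓ1 : ∀ j i k : Fin n, r ≤ (j : ℕ) → (i : ℕ) < r → (k : ℕ) < r →
      Γ j i k = 2 * T j i k)
    (hΓsupp : ∀ j i k : Fin n,
      ¬((r ≤ (j : ℕ) ∧ (i : ℕ) < r ∧ (k : ℕ) < r) ∨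
        ((j : ℕ) < r ∧ (i : ℕ) < r ∧ r ≤ (k : ℕ))) → Γ j i k = 0)
    (hvanish : ∀ j i k l : Fin n,
      ∑ p, (T j p k * star (Γ i p l) + T j i p * star (Γ k p l)
        - T p i k * star (Γ p j l)) = 0) :
    ∀ α i k : Fin n, r ≤ (α : ℕ) → (i : ℕ) < r → (k : ℕ) < r →
      T α i k = 0 := by
  intro α i k hα hi hk
  have h := hvanish α α k k
  have h1 : ∀ p : Fin n, T α α p = 0 := fun p =>
    hTsupp α α p (by rintro ⟨_, h2, _⟩; omega)
  have h2 : ∀ p : Fin n, T p α k = 0 := fun p =>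
    hTsupp p α k (by rintro ⟨_, h2, _⟩; omega)
  simp only [h1, h2, zero_mul, add_zero, sub_zero] at h
  have h3 : ∀ p : Fin n, T α p k * star (Γ α p k)
      = 2 * (Complex.normSq (T α p k) : ℂ) := by
    intro p
    by_cases hp : (p : ℕ) < r
    · rw [hΓ1 α p k hα hp hk]
      rw [star_mul']
      rw [show (star (2:ℂ)) = 2 by simp]
      rw [show T α p k * (2 * star (T α p k)) = 2 * (T α p k * star (T α p k)) by ring]
      rw [Complex.star_def, Complex.mul_conj]
    · rw [hTsupp α p k (by rintro ⟨_, h2, _⟩; omega)]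
      simp
  rw [Finset.sum_congr rfl (fun p _ => h3 p), ← Finset.mul_sum] at h
  have h4 : (∑ p, (Complex.normSq (T α p k) : ℂ)) = 0 := by
    have : (2:ℂ) ≠ 0 := by norm_num
    exact (mul_eq_zero.mp h).resolve_left this
  rw [← Complex.ofReal_sum] at h4
  have h5 : (∑ p, Complex.normSq (T α p k)) = 0 := by exact_mod_cast h4
  have h6 := (Finset.sum_eq_zero_iff_of_nonneg
    (fun p _ => Complex.normSq_nonneg (T α p k))).mp h5 i (Finset.mem_univ i)
  exact Complex.normSq_eq_zero.mp h6
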